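/- For every n ≥ 1, real numbers a < b, and real d, ∫_a^b S_n(u; a, b, d) du = 2^n (b−a)^{n+1} B_n(1/2 + d/(b−a)). -/

import Mathlib

open scoped BigOperators
open MeasureTheory

/-- MacMahon numbers `M n k`: `M n 1 = 1`, `M n k = 0` outside `1 ≤ k ≤ n`, and
`M n k = (2k−1) M (n−1) k + (2n−2k+1) M (n−1) (k−1)`. -/
def macmahon : ℕ → ℕ → ℕ
  | 0, _ => 0
  | 1, 1 => 1
  | 1, _ => 0
  | n + 2, 0 => 0
  | n + 2, k + 1 =>
      (2 * k + 1) * macmahon (n + 1) (k + 1) +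
        (2 * (n + 2) - 2 * (k + 1) + 1) * macmahon (n + 1) k

/-- Derivative polynomial `Q_n(u;a,b) = Σ_{k=1}^{n+1} M_{n+1,k} (u-a)^(n+1-k) (u-b)^(k-1)`. -/
noncomputable def Q (n : ℕ) (a b u : ℝ) : ℝ :=
  ∑ k ∈ Finset.Icc 1 (n + 1), (macmahon (n + 1) k : ℝ) * (u - a) ^ (n + 1 - k) * (u - b) ^ (k - 1)

/-- `S_n(u;a,b,d) = Σ_{k=0}^n C(n,k) (2d)^k Q_{n-k}(u;a,b)`. -/
noncomputable def S (n : ℕ) (a b d u : ℝ) : ℝ :=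
  ∑ k ∈ Finset.range (n + 1), (n.choose k : ℝ) * (2 * d) ^ k * Q (n - k) a b u

/-- The `n`-th Bernoulli polynomial evaluated at a real `x`
(convention `t e^{xt}/(e^t - 1) = Σ B_n(x) t^n / n!`). -/
noncomputable def bernPoly (n : ℕ) (x : ℝ) : ℝ :=
  ((Polynomial.bernoulli n).map (algebraMap ℚ ℝ)).eval x

/-!
Write `appell x c n = ∑ C(n,i) c^(n-i) x_i`, so that `S_n = appell Q (2d) n`. The `Q_n` are the
iterates `L^n 1` of the operator `L p = (2u-a-b) p + 2(u-a)(u-b) p'`, hence the polynomial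
`appell Q c n` is `(c + L)^n 1`. With `h = b - a` a direct computation gives
`(h + L)^(n+1) 1 - (-h + L)^(n+1) 1 = h (2(u-a) (-h + L)^n 1)'`, and integrating over `[a, b]`
shows that the moments `I_m = ∫_a^b Q_m` satisfy `appell I h (n+1) - appell I (-h) (n+1) = 2h²0^n`.
This triangular system (the coefficient of `I_n` is `2(n+1)h`) has exactly one solution, and
`h · appell ((2h)^i B_i) h` is one because `B_{n+1}(1) - B_{n+1}(0) = (n+1) 0^n`. Composing Appell
transforms, `∫ S_n = h · appell ((2h)^i B_i) (h + 2d) n = 2^n h^(n+1) B_n(1/2 + d/h)`.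
-/

open Polynomial Finset

section Appell

variable {R M : Type*} [CommRing R] [AddCommGroup M] [Module R M]

def appell (x : ℕ → M) (c : R) (n : ℕ) : M :=
  ∑ i ∈ range (n + 1), ((n.choose i : R) * c ^ (n - i)) • x i

lemma map_appell {N : Type*} [AddCommGroup N] [Module R N] (f : M →ₗ[R] N) (x : ℕ → M) (c : R)
    (n : ℕ) : f (appell x c n) = appell (fun i => f (x i)) c n := by
  simp [appell]

lemma appell_sub (x y : ℕ → M) (c : R) (n : ℕ) :
    appell (x - y) c n = appell x c n - appell y c n := by
  simp [appell, smul_sub]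

lemma appell_smul (r : R) (x : ℕ → M) (c : R) (n : ℕ) :
    appell (fun i => r • x i) c n = r • appell x c n := by
  simp [appell, smul_sum, smul_comm r]

lemma appell_pow_apply (f : Module.End R M) (v : M) (c : R) (n : ℕ) :
    appell (fun i => (f ^ i) v) c n = ((algebraMap R (Module.End R M) c + f) ^ n) v := by
  rw [add_comm, (Algebra.commute_algebraMap_right c f).add_pow, appell, LinearMap.sum_apply]
  refine sum_congr rfl fun i _ => ?_
  simp [← map_pow, mul_smul, Nat.cast_smul_eq_nsmul]

lemma appell_apply {ι : Type*} (x : ℕ → ι → M) (c : R) (n : ℕ) (j : ι) :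
    appell x c n j = appell (fun i => x i j) c n :=
  map_appell (LinearMap.proj j) x c n

lemma appell_eq_shift_pow_apply (x : ℕ → M) (c : R) (n : ℕ) :
    appell x c n =
      ((algebraMap R _ c + LinearMap.funLeft R M Nat.succ) ^ n) x 0 := by
  have hshift : ∀ i, (LinearMap.funLeft R M Nat.succ ^ i) x = fun j => x (j + i) := by
    intro i
    induction i with
    | zero => rfl
    | succ i ih =>
      rw [pow_succ', Module.End.mul_apply, ih]
      ext j
      simp [LinearMap.funLeft, Nat.add_right_comm j 1 i, Nat.add_assoc]
  rw [← appell_pow_apply, appell_apply]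
  simp [hshift]

lemma appell_appell (x : ℕ → M) (c c' : R) (n : ℕ) :
    appell (appell x c) c' n = appell x (c + c') n := by
  have hx : appell x c =
      fun k => (((algebraMap R _ c + LinearMap.funLeft R M Nat.succ) ^ k) x) 0 :=
    funext (appell_eq_shift_pow_apply x c)
  rw [hx, ← appell_apply, appell_pow_apply, appell_eq_shift_pow_apply, map_add, add_assoc,
    add_left_comm]

lemma appell_mul_pow (x : ℕ → R) (t c : R) (n : ℕ) :
    appell (fun i => t ^ i * x i) (t * c) n = t ^ n * appell x c n := by
  simp only [appell, smul_eq_mul, mul_sum]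
  refine sum_congr rfl fun i hi => ?_
  rw [← pow_mul_pow_sub t (mem_range_succ_iff.mp hi)]
  ring

end Appell

lemma eq_of_forall_appell_sub_eq {K : Type*} [Field K] [CharZero K] {x y : ℕ → K} {c c' : K}
    (hc : c ≠ c')
    (h : ∀ n, appell x c (n + 1) - appell x c' (n + 1) =
      appell y c (n + 1) - appell y c' (n + 1)) :
    x = y := by
  have hz : ∀ n, appell (x - y) c (n + 1) = appell (x - y) c' (n + 1) := fun n => by
    simp only [appell_sub]
    linear_combination h n
  suffices ∀ n, (x - y) n = 0 from funext fun n => sub_eq_zero.mp (this n)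
  intro n
  induction n using Nat.strong_induction_on with
  | _ n ih =>
    -- only the top two terms of `appell (x - y) e (n + 1)` survive
    have htop : ∀ e, appell (x - y) e (n + 1) = (n + 1) * e * (x - y) n + (x - y) (n + 1) := by
      intro e
      rw [appell, sum_range_succ, sum_range_succ,
        sum_eq_zero fun i hi => by rw [ih i (mem_range.mp hi), smul_zero]]
      simp
    have hn := hz n
    rw [htop, htop] at hn
    have : ((n : K) + 1) * (c - c') * (x - y) n = 0 := by linear_combination hn
    simpa [sub_ne_zero.mpr hc, Nat.cast_add_one_ne_zero] using this

lemma macmahon_zero_right : ∀ n, macmahon n 0 = 0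
  | 0 | 1 | _ + 2 => rfl

lemma macmahon_eq_zero_of_lt : ∀ {n k}, n < k → macmahon n k = 0
  | 0, _, _ | 1, _ + 2, _ => rfl
  | 1, 0, h | 1, 1, h | _ + 2, 0, h => by omega
  | n + 2, k + 1, h => by
    simp only [macmahon, macmahon_eq_zero_of_lt (by omega : n + 1 < k + 1),
      macmahon_eq_zero_of_lt (by omega : n + 1 < k), mul_zero, add_zero]

section MacMahonPoly

variable {R : Type*} [CommRing R] (a b : R)

noncomputable def macmahonOp : Module.End R R[X] :=
  LinearMap.mulLeft R (X - C a + (X - C b)) +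
    LinearMap.mulLeft R (2 * (X - C a) * (X - C b)) ∘ₗ derivative

lemma macmahonOp_apply (p : R[X]) :
    macmahonOp a b p =
      (X - C a + (X - C b)) * p + 2 * (X - C a) * (X - C b) * derivative p :=
  rfl

lemma macmahonOp_pow_mul_pow (i j : ℕ) :
    macmahonOp a b ((X - C a) ^ i * (X - C b) ^ j) =
      (2 * j + 1) • ((X - C a) ^ (i + 1) * (X - C b) ^ j) +
        (2 * i + 1) • ((X - C a) ^ i * (X - C b) ^ (j + 1)) := by
  rw [macmahonOp_apply, derivative_mul, derivative_X_sub_C_pow, derivative_X_sub_C_pow]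
  rcases i with _ | i <;> rcases j with _ | j <;>
    simp only [pow_zero, pow_succ, one_mul, mul_one, mul_zero, zero_mul, add_zero, zero_add,
      zero_tsub, add_tsub_cancel_right, Nat.cast_zero, Nat.cast_add, Nat.cast_one, Nat.cast_mul,
      Nat.cast_ofNat, map_zero, map_add, map_natCast, map_one, nsmul_eq_mul, one_smul] <;>
    ring

noncomputable def macmahonPoly (n : ℕ) : R[X] :=
  ∑ p ∈ antidiagonal n, macmahon (n + 1) (p.1 + 1) • ((X - C a) ^ p.2 * (X - C b) ^ p.1)

lemma macmahonPoly_zero : macmahonPoly a b 0 = 1 := by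
  simp [macmahonPoly, macmahon]

lemma macmahonPoly_succ (n : ℕ) :
    macmahonPoly a b (n + 1) = macmahonOp a b (macmahonPoly a b n) := by
  have hsplit : ∀ p ∈ antidiagonal (n + 1), macmahon (n + 2) (p.1 + 1) =
      (2 * p.1 + 1) * macmahon (n + 1) (p.1 + 1) + (2 * p.2 + 1) * macmahon (n + 1) p.1 := by
    rintro ⟨j, i⟩ hp
    rw [HasAntidiagonal.mem_antidiagonal] at hp
    rw [macmahon]
    congr 3
    omega
  rw [macmahonPoly, sum_congr rfl fun p hp => by rw [hsplit p hp, add_smul, mul_smul, mul_smul],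
    sum_add_distrib, Nat.sum_antidiagonal_succ', Nat.sum_antidiagonal_succ, macmahonPoly, map_sum]
  simp only [macmahon_eq_zero_of_lt (Nat.lt_succ_self (n + 1)), macmahon_zero_right, zero_smul,
    smul_zero, zero_add, map_nsmul, macmahonOp_pow_mul_pow, smul_add, sum_add_distrib]
  congr 1 <;> exact sum_congr rfl fun p _ => smul_comm _ _ _

lemma macmahonPoly_eq_pow_apply (n : ℕ) : macmahonPoly a b n = (macmahonOp a b ^ n) 1 := by
  induction n with
  | zero => exact macmahonPoly_zero a b
  | succ n ih => rw [macmahonPoly_succ, ih, pow_succ', Module.End.mul_apply]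

lemma algebraMap_add_macmahonOp_apply (c : R) (p : R[X]) :
    (algebraMap R (Module.End R R[X]) c + macmahonOp a b) p =
      (C c + X - C a + (X - C b)) * p + 2 * (X - C a) * (X - C b) * derivative p := by
  rw [LinearMap.add_apply, Module.algebraMap_end_apply, smul_eq_C_mul, macmahonOp_apply]
  ring

lemma eval_algebraMap_add_macmahonOp_pow (c : R) (n : ℕ) :
    (((algebraMap R _ c + macmahonOp a b) ^ n) 1).eval b = (c + (b - a)) ^ n := by
  induction n with
  | zero => simp
  | succ n ih =>
    rw [pow_succ', Module.End.mul_apply, algebraMap_add_macmahonOp_apply, pow_succ', ← ih]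
    simp [add_sub_assoc]

lemma algebraMap_add_macmahonOp_pow_sub (n : ℕ) :
    ((algebraMap R _ (b - a) + macmahonOp a b) ^ (n + 1)) 1 -
        ((algebraMap R _ (a - b) + macmahonOp a b) ^ (n + 1)) 1 =
      C (b - a) *
        derivative (2 * (X - C a) * ((algebraMap R _ (a - b) + macmahonOp a b) ^ n) 1) := by
  induction n with
  | zero =>
    simp only [pow_one, zero_add, pow_zero, Module.End.one_apply, algebraMap_add_macmahonOp_apply]
    simp only [C_sub, derivative_mul, derivative_one, derivative_sub, derivative_X, derivative_C,
      derivative_ofNat]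
    ring
  | succ n ih =>
    rw [sub_eq_iff_eq_add] at ih
    rw [pow_succ' _ (n + 1), Module.End.mul_apply, ih, pow_succ' _ (n + 1), Module.End.mul_apply,
      pow_succ', Module.End.mul_apply]
    generalize ((algebraMap R _ (a - b) + macmahonOp a b) ^ n) 1 = v
    simp only [algebraMap_add_macmahonOp_apply, C_sub, derivative_mul, derivative_add,
      derivative_sub, derivative_X, derivative_C, derivative_ofNat, derivative_one, derivative_zero]
    ring

end MacMahonPoly

lemma Q_eq_eval_macmahonPoly (n : ℕ) (a b u : ℝ) : Q n a b u = (macmahonPoly a b n).eval u := by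
  rw [Q, macmahonPoly, eval_finsetSum, Nat.sum_antidiagonal_eq_sum_range_succ_mk,
    ← Finset.Ico_add_one_right_eq_Icc, sum_Ico_eq_sum_range]
  refine sum_congr rfl fun k _ => ?_
  rw [show n + 1 - (1 + k) = n - k by omega, Nat.add_sub_cancel_left, Nat.add_comm 1 k]
  simp [mul_assoc]

lemma intervalIntegrable_Q (n : ℕ) (a b : ℝ) :
    IntervalIntegrable (fun u => Q n a b u) volume a b := by
  simp_rw [Q_eq_eval_macmahonPoly]
  exact (macmahonPoly a b n).continuous.intervalIntegrable _ _

lemma S_eq_appell (n : ℕ) (a b d u : ℝ) :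
    S n a b d u = appell (fun i => Q i a b u) (2 * d) n := by
  rw [S, appell, ← sum_range_reflect]
  refine sum_congr rfl fun k hk => ?_
  have hk : k ≤ n := mem_range_succ_iff.mp hk
  rw [Nat.add_sub_cancel, Nat.choose_symm hk, Nat.sub_sub_self hk, smul_eq_mul]

lemma integral_appell {f : ℕ → ℝ → ℝ} {a b : ℝ}
    (hf : ∀ i, IntervalIntegrable (f i) volume a b) (c : ℝ) (n : ℕ) :
    ∫ u in a..b, appell (fun i => f i u) c n = appell (fun i => ∫ u in a..b, f i u) c n := by
  simp only [appell, smul_eq_mul]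
  rw [intervalIntegral.integral_finsetSum fun i _ => (hf i).const_mul _]
  simp

lemma integral_eval_algebraMap_add_macmahonOp_pow (a b c : ℝ) (n : ℕ) :
    ∫ u in a..b, (((algebraMap ℝ _ c + macmahonOp a b) ^ n) 1).eval u =
      appell (fun i => ∫ u in a..b, Q i a b u) c n := by
  simp_rw [← appell_pow_apply, ← macmahonPoly_eq_pow_apply, ← leval_apply, map_appell,
    leval_apply, ← Q_eq_eval_macmahonPoly]
  exact integral_appell (fun i => intervalIntegrable_Q i a b) c n

lemma appell_integral_Q_sub (a b : ℝ) (n : ℕ) :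
    appell (fun i => ∫ u in a..b, Q i a b u) (b - a) (n + 1) -
        appell (fun i => ∫ u in a..b, Q i a b u) (-(b - a)) (n + 1) =
      2 * (b - a) ^ 2 * 0 ^ n := by
  rw [neg_sub, ← integral_eval_algebraMap_add_macmahonOp_pow,
    ← integral_eval_algebraMap_add_macmahonOp_pow, ← intervalIntegral.integral_sub
      ((Polynomial.continuous _).intervalIntegrable _ _)
      ((Polynomial.continuous _).intervalIntegrable _ _)]
  simp_rw [← eval_sub, algebraMap_add_macmahonOp_pow_sub, eval_mul, eval_C]
  rw [intervalIntegral.integral_const_mul, intervalIntegral.integral_eq_sub_of_hasDerivAt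
    (fun u _ => Polynomial.hasDerivAt _ u) ((Polynomial.continuous _).intervalIntegrable _ _)]
  simp only [eval_mul, eval_sub, eval_X, eval_C, eval_ofNat, eval_algebraMap_add_macmahonOp_pow]
  ring

lemma bernPoly_eq_appell (n : ℕ) (x : ℝ) :
    bernPoly n x = appell (fun i => (bernoulli i : ℝ)) x n := by
  rw [bernPoly, Polynomial.bernoulli, Polynomial.map_sum, eval_finsetSum, appell]
  refine sum_congr rfl fun i _ => ?_
  simp only [Polynomial.map_monomial, eval_monomial, eq_ratCast, smul_eq_mul]
  push_cast
  ring

lemma appell_pow_mul_bernoulli {t : ℝ} (ht : t ≠ 0) (y : ℝ) (n : ℕ) :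
    appell (fun i => t ^ i * (bernoulli i : ℝ)) y n = t ^ n * bernPoly n (y / t) := by
  rw [bernPoly_eq_appell, ← appell_mul_pow, mul_div_cancel₀ _ ht]

lemma bernPoly_one_sub_bernPoly_zero (n : ℕ) :
    bernPoly (n + 1) 1 - bernPoly (n + 1) 0 = (n + 1) * 0 ^ n := by
  have h := congrArg (algebraMap ℚ ℝ) (Polynomial.bernoulli_eval_one_add (n + 1) 0)
  simp only [add_zero, map_add, map_mul, map_pow, map_natCast, map_zero] at h
  rw [bernPoly, bernPoly, eval_one_map, eval_zero_map, h]
  simp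

lemma appell_bernoulli_sub {h : ℝ} (hh : h ≠ 0) (n : ℕ) :
    appell (fun m => h • appell (fun i => (2 * h) ^ i * (bernoulli i : ℝ)) h m) h (n + 1) -
        appell (fun m => h • appell (fun i => (2 * h) ^ i * (bernoulli i : ℝ)) h m) (-h) (n + 1) =
      2 * h ^ 2 * 0 ^ n := by
  have h2 : 2 * h ≠ 0 := mul_ne_zero two_ne_zero hh
  rw [appell_smul, appell_smul, appell_appell, appell_appell, appell_pow_mul_bernoulli h2,
    appell_pow_mul_bernoulli h2, add_neg_cancel, zero_div, ← two_mul, div_self h2, smul_eq_mul,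
    smul_eq_mul, ← mul_sub, ← mul_sub, bernPoly_one_sub_bernPoly_zero]
  rcases n with _ | n
  · ring
  · simp

lemma integral_Q_eq {a b : ℝ} (hab : a ≠ b) :
    (fun m => ∫ u in a..b, Q m a b u) =
      fun m => (b - a) • appell (fun i => (2 * (b - a)) ^ i * (bernoulli i : ℝ)) (b - a) m := by
  have hba : b - a ≠ 0 := sub_ne_zero.mpr hab.symm
  refine eq_of_forall_appell_sub_eq (c := b - a) (c' := -(b - a))
    (fun h => hba (by linarith)) fun n => ?_
  rw [appell_integral_Q_sub, appell_bernoulli_sub hba]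

theorem integral_S_general (n : ℕ) (a b : ℝ) (hab : a < b) (d : ℝ) :
    ∫ u in a..b, S n a b d u =
      2 ^ n * (b - a) ^ (n + 1) * bernPoly n (1 / 2 + d / (b - a)) := by
  have hba : b - a ≠ 0 := sub_ne_zero.mpr hab.ne'
  simp_rw [S_eq_appell]
  rw [integral_appell (fun i => intervalIntegrable_Q i a b), integral_Q_eq hab.ne, appell_smul,
    appell_appell, appell_pow_mul_bernoulli (mul_ne_zero two_ne_zero hba), smul_eq_mul, mul_pow,
    show (b - a + 2 * d) / (2 * (b - a)) = 1 / 2 + d / (b - a) by field_simp]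
  ring

theorem integral_S (n : ℕ) (hn : 1 ≤ n) (a b : ℝ) (hab : a < b) (d : ℝ) :
    ∫ u in a..b, S n a b d u =
      2 ^ n * (b - a) ^ (n + 1) * bernPoly n (1 / 2 + d / (b - a)) :=
  integral_S_general n a b hab d
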